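/- arXiv:math/0303104 — 8 statements merged into one kernel-verified Lean document; each statement's English description precedes it below -/
import Mathlib

section
/- Let C ⊆ F_q^n be a linear code that is formally self-orthogonal, i.e., there exists x ∈ F_q^n with all coordinates nonzero such that C ⊆ x * C^⊥ (coordinatewise multiplication by x applied to the dual code). Then for every i with 1 ≤ i ≤ n, either P_{i-1}(C) = P_i(C) or F_{i-1}(C) = F_i(C), where P and F denote past and future subcodes (identified as subspaces of codewords supported on the relevant coordinates). -/
variable {F : Type*} [Field F] [Fintype F] [DecidableEq F] {n : ℕ}

/-- The `i`-th past subcode: codewords of `C` vanishing on coordinates `i+1, …, n`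
(identified as a subspace of `F^n` supported on the first `i` coordinates). -/
def pastCode (C : Submodule F (Fin n → F)) (i : ℕ) : Submodule F (Fin n → F) where
  carrier := {c | c ∈ C ∧ ∀ j : Fin n, i ≤ (j : ℕ) → c j = 0}
  add_mem' := fun {a b} ha hb => ⟨C.add_mem ha.1 hb.1,
    fun j hj => by simp [Pi.add_apply, ha.2 j hj, hb.2 j hj]⟩
  zero_mem' := ⟨C.zero_mem, fun j _ => rfl⟩
  smul_mem' := fun c {x} hx => ⟨C.smul_mem c hx.1,
    fun j hj => by simp [Pi.smul_apply, hx.2 j hj]⟩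

/-- The `i`-th future subcode: codewords of `C` vanishing on coordinates `1, …, i`. -/
def futureCode (C : Submodule F (Fin n → F)) (i : ℕ) : Submodule F (Fin n → F) where
  carrier := {c | c ∈ C ∧ ∀ j : Fin n, (j : ℕ) < i → c j = 0}
  add_mem' := fun {a b} ha hb => ⟨C.add_mem ha.1 hb.1,
    fun j hj => by simp [Pi.add_apply, ha.2 j hj, hb.2 j hj]⟩
  zero_mem' := ⟨C.zero_mem, fun j _ => rfl⟩
  smul_mem' := fun c {x} hx => ⟨C.smul_mem c hx.1,
    fun j hj => by simp [Pi.smul_apply, hx.2 j hj]⟩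

/-- The dual code with respect to the standard bilinear form. -/
def dualCode (C : Submodule F (Fin n → F)) : Submodule F (Fin n → F) where
  carrier := {y | ∀ c ∈ C, ∑ j, y j * c j = 0}
  add_mem' := fun {a b} ha hb c hc => by
    simp [Pi.add_apply, add_mul, Finset.sum_add_distrib, ha c hc, hb c hc]
  zero_mem' := fun c _ => by simp
  smul_mem' := fun t {x} hx c hc => by
    simp [Pi.smul_apply, mul_assoc, ← Finset.mul_sum, hx c hc]

/-- `C` is formally self-orthogonal: `C ⊆ x * C^⊥` for some tuple `x` of
nonzero field elements, with `*` the coordinatewise multiplication. -/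
def FormallySelfOrthogonal (C : Submodule F (Fin n → F)) : Prop :=
  ∃ x : Fin n → F, (∀ j, x j ≠ 0) ∧
    ∀ c ∈ C, ∃ y ∈ dualCode C, c = fun j => x j * y j

/-- If `C` is formally self-orthogonal then for every `1 ≤ i ≤ n`,
either `P_{i-1}(C) = P_i(C)` or `F_{i-1}(C) = F_i(C)`. -/
theorem past_or_future_stable_of_formallySelfOrthogonal
    {F : Type*} [Field F] [Fintype F] [DecidableEq F] {n : ℕ}
    (C : Submodule F (Fin n → F)) (hC : FormallySelfOrthogonal C) :
    ∀ i : ℕ, 1 ≤ i → i ≤ n →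
      pastCode C (i - 1) = pastCode C i ∨ futureCode C (i - 1) = futureCode C i := by
  obtain ⟨x, hx, hxy⟩ := hC
  intro i hi hin
  rw [or_iff_not_imp_left]
  intro hne
  have hsub : pastCode C (i - 1) ≤ pastCode C i := by
    intro c hc
    exact ⟨hc.1, fun j hj => hc.2 j (by omega)⟩
  obtain ⟨c, hcPi, hcnot⟩ := SetLike.exists_of_lt (hsub.lt_of_ne hne)
  let k : Fin n := ⟨i - 1, by omega⟩
  have hkval : (k : ℕ) = i - 1 := rfl
  have hck : c k ≠ 0 := by
    intro h0
    apply hcnot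
    refine ⟨hcPi.1, fun j hj => ?_⟩
    rcases Nat.lt_or_ge (j : ℕ) i with hji | hji
    · have : j = k := Fin.ext (by rw [hkval]; omega)
      rwa [this]
    · exact hcPi.2 j hji
  apply le_antisymm
  · intro d hd
    refine ⟨hd.1, fun j hj => ?_⟩
    rcases Nat.lt_or_ge (j : ℕ) (i - 1) with hji | hji
    · exact hd.2 j hji
    · have hjk : j = k := Fin.ext (by rw [hkval]; omega)
      rw [hjk]
      obtain ⟨y, hy, hdy⟩ := hxy d hd.1
      have hsum := hy c hcPi.1
      have hterm : ∀ b ∈ Finset.univ, b ≠ k → y b * c b = 0 := by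
        intro b _ hb
        rcases Nat.lt_or_ge (b : ℕ) i with hbi | hbi
        · have hblt : (b : ℕ) < i - 1 := by
            rcases Nat.lt_or_ge (b : ℕ) (i - 1) with h | h
            · exact h
            · exact absurd (Fin.ext (show (b : ℕ) = (k : ℕ) by rw [hkval]; omega)) hb
          have hdb : d b = 0 := hd.2 b hblt
          rw [hdy] at hdb
          have : y b = 0 := by
            rcases mul_eq_zero.mp hdb with h | h
            · exact absurd h (hx b)
            · exact h
          rw [this, zero_mul]
        · rw [hcPi.2 b hbi, mul_zero]
      rw [Finset.sum_eq_single_of_mem k (Finset.mem_univ k) hterm] at hsum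
      have hyj : y k = 0 := by
        rcases mul_eq_zero.mp hsum with h | h
        · exact h
        · exact absurd h hck
      rw [hdy]
      simp [hyj]
  · intro d hd
    exact ⟨hd.1, fun j hj => hd.2 j (by omega)⟩
end

section
/- Let C be a formally self-orthogonal linear [n,k,d] code over F_q with 2d ≤ n+1. Let p_i = dim P_i(C) and f_i = dim F_i(C). Then for all 0 ≤ i ≤ j ≤ n one has (p_j - p_i) + (f_i - f_j) ≤ j - i. -/
/-! Passing from `i` to `i + 1` the past code can grow by at most one dimension and the future
code can shrink by at most one, since in each case the change is governed by the coordinate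
functional at `i` (rank–nullity). Both cannot happen at once: if `c ∈ C` is supported on
`{0, …, i}` and `c' = x * y ∈ C` with `y ∈ C^⊥` is supported on `{i, …, n - 1}`, then
`0 = ⟪y, c⟫ = y i * c i`, so `c i = 0` or `c' i = 0`. Summing over the steps from `i` to `j`
gives the bound. -/

variable {F : Type*} [Field F] [Fintype F] [DecidableEq F] {n : ℕ}

open Module

theorem Submodule.finrank_le_finrank_inf_ker_add_one {K V : Type*} [Field K] [AddCommGroup V]
    [Module K V] (W : Submodule K V) [FiniteDimensional K W] (φ : Dual K V) :
    finrank K W ≤ finrank K ↥(W ⊓ LinearMap.ker φ) + 1 := by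
  have hker : finrank K (LinearMap.ker (φ.domRestrict W)) = finrank K ↥(W ⊓ LinearMap.ker φ) := by
    rw [LinearMap.ker_domRestrict, ← Submodule.map_comap_subtype,
      Submodule.finrank_map_subtype_eq]
  have hrange : finrank K (LinearMap.range (φ.domRestrict W)) ≤ 1 :=
    (Submodule.finrank_le _).trans_eq (finrank_self K)
  have := LinearMap.finrank_range_add_finrank_ker (φ.domRestrict W)
  omega

section

variable {K : Type*} [Field K]

theorem pastCode_eq_inf_ker_proj (C : Submodule K (Fin n → K)) (i : Fin n) :
    pastCode C i = pastCode C (i + 1) ⊓ LinearMap.ker (LinearMap.proj i) := by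
  ext c
  refine ⟨fun ⟨hcC, hc⟩ => ⟨⟨hcC, fun j hj => hc j (by omega)⟩, hc i le_rfl⟩,
    fun ⟨⟨hcC, hc⟩, hci⟩ => ⟨hcC, fun j hj => ?_⟩⟩
  rcases hj.eq_or_lt with hji | hji
  · rwa [Fin.ext hji.symm]
  · exact hc j hji

theorem futureCode_succ_eq_inf_ker_proj (C : Submodule K (Fin n → K)) (i : Fin n) :
    futureCode C (i + 1) = futureCode C i ⊓ LinearMap.ker (LinearMap.proj i) := by
  ext c
  refine ⟨fun ⟨hcC, hc⟩ => ⟨⟨hcC, fun j hj => hc j (by omega)⟩, hc i (by omega)⟩,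
    fun ⟨⟨hcC, hc⟩, hci⟩ => ⟨hcC, fun j hj => ?_⟩⟩
  rcases (Nat.lt_succ_iff.mp hj).eq_or_lt with hji | hji
  · rwa [Fin.ext hji]
  · exact hc j hji

theorem FormallySelfOrthogonal.apply_eq_zero_or_apply_eq_zero {C : Submodule K (Fin n → K)}
    (hC : FormallySelfOrthogonal C) {i : Fin n} {c c' : Fin n → K}
    (hc : c ∈ pastCode C (i + 1)) (hc' : c' ∈ futureCode C i) : c i = 0 ∨ c' i = 0 := by
  obtain ⟨x, hx, hxC⟩ := hC
  obtain ⟨y, hy, rfl⟩ := hxC c' hc'.1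
  have hy_lt : ∀ j : Fin n, j < i → y j = 0 := fun j hj =>
    (mul_eq_zero.mp (hc'.2 j hj)).resolve_left (hx j)
  have hsum : ∑ j, y j * c j = y i * c i := by
    refine Finset.sum_eq_single i (fun j _ hji => ?_) (by simp)
    rcases hji.lt_or_gt with hj | hj
    · rw [hy_lt j hj, zero_mul]
    · rw [hc.2 j (by omega), mul_zero]
  have hyc : y i * c i = 0 := hsum ▸ hy c hc.1
  rcases mul_eq_zero.mp hyc with h | h
  · exact Or.inr (by simp [h])
  · exact Or.inl h

theorem FormallySelfOrthogonal.finrank_pastCode_succ_add_finrank_futureCode_le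
    {C : Submodule K (Fin n → K)} (hC : FormallySelfOrthogonal C) (i : Fin n) :
    finrank K (pastCode C (i + 1)) + finrank K (futureCode C i) ≤
      finrank K (pastCode C i) + finrank K (futureCode C (i + 1)) + 1 := by
  by_cases hpast : pastCode C (i + 1) ≤ LinearMap.ker (LinearMap.proj i)
  · have hp : pastCode C i = pastCode C (i + 1) := by
      rw [pastCode_eq_inf_ker_proj, inf_eq_left.mpr hpast]
    have hf := (futureCode C i).finrank_le_finrank_inf_ker_add_one (LinearMap.proj i)
    rw [← futureCode_succ_eq_inf_ker_proj] at hf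
    rw [hp]
    omega
  · obtain ⟨c, hc, hci⟩ := SetLike.not_le_iff_exists.mp hpast
    have hfuture : futureCode C i ≤ LinearMap.ker (LinearMap.proj i) := fun c' hc' =>
      (hC.apply_eq_zero_or_apply_eq_zero hc hc').resolve_left hci
    have hf : futureCode C (i + 1) = futureCode C i := by
      rw [futureCode_succ_eq_inf_ker_proj, inf_eq_left.mpr hfuture]
    have hp := (pastCode C (i + 1)).finrank_le_finrank_inf_ker_add_one (LinearMap.proj i)
    rw [← pastCode_eq_inf_ker_proj] at hp
    rw [hf]
    omega

theorem FormallySelfOrthogonal.finrank_pastCode_add_finrank_futureCode_le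
    {C : Submodule K (Fin n → K)} (hC : FormallySelfOrthogonal C) {i j : ℕ} (hij : i ≤ j)
    (hjn : j ≤ n) :
    finrank K (pastCode C j) + finrank K (futureCode C i) ≤
      finrank K (pastCode C i) + finrank K (futureCode C j) + (j - i) := by
  induction j, hij using Nat.le_induction with
  | base => omega
  | succ j hij ih =>
    have hstep := hC.finrank_pastCode_succ_add_finrank_futureCode_le ⟨j, hjn⟩
    simp only at hstep
    have := ih (by omega)
    omega

end

theorem fso_dim_inequality_general
    {F : Type*} [Field F] {n : ℕ}
    (C : Submodule F (Fin n → F)) (hC : FormallySelfOrthogonal C) :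
    ∀ i j : ℕ, i ≤ j → j ≤ n →
      ((Module.finrank F (pastCode C j) : ℤ) - Module.finrank F (pastCode C i)) +
        ((Module.finrank F (futureCode C i) : ℤ) - Module.finrank F (futureCode C j))
        ≤ (j : ℤ) - i := by
  intro i j hij hjn
  have := hC.finrank_pastCode_add_finrank_futureCode_le hij hjn
  omega

/-- For a formally self-orthogonal `[n,k,d]` code with `2d ≤ n+1`,
`(p_j - p_i) + (f_i - f_j) ≤ j - i` for all `0 ≤ i ≤ j ≤ n`. -/
theorem fso_dim_inequality
    {F : Type*} [Field F] [Fintype F] [DecidableEq F] {n k d : ℕ}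
    (C : Submodule F (Fin n → F)) (hk : Module.finrank F C = k)
    (hdist : ∀ c ∈ C, c ≠ 0 → d ≤ hammingNorm c)
    (hdist' : ∃ c ∈ C, c ≠ 0 ∧ hammingNorm c = d)
    (h2d : 2 * d ≤ n + 1) (hC : FormallySelfOrthogonal C) :
    ∀ i j : ℕ, i ≤ j → j ≤ n →
      ((Module.finrank F (pastCode C j) : ℤ) - Module.finrank F (pastCode C i)) +
        ((Module.finrank F (futureCode C i) : ℤ) - Module.finrank F (futureCode C j))
        ≤ (j : ℤ) - i :=
  fso_dim_inequality_general C hC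
end

section
/- Let X be a smooth projective geometrically irreducible curve of genus g over F_q with X(F_q) nonempty, and let GS(X) = {γ_i : i ≥ 1} be its set of gonality numbers. For any integer a with 0 ≤ a ≤ 2g-1, a ∈ GS(X) if and only if 2g-1-a ∉ GS(X). -/
/-- An abstract model of a smooth projective geometrically irreducible curve of
genus `g` over a finite field with a rational point: the group of rational
divisors together with the degree map, the dimension `ℓ` of Riemann–Roch
spaces, a canonical divisor, the Riemann–Roch theorem, Clifford's theorem, and
a rational point (i.e. `X(F_q) ≠ ∅`). -/
structure RRCurve where
  /-- the genus -/
  g : ℕ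
  /-- the group of rational divisors -/
  Div : Type
  [grp : AddCommGroup Div]
  /-- the degree of a divisor -/
  deg : Div → ℤ
  deg_add : ∀ A B : Div, deg (A + B) = deg A + deg B
  deg_neg : ∀ A : Div, deg (-A) = -deg A
  /-- the dimension of the Riemann–Roch space -/
  l : Div → ℕ
  l_zero : l 0 = 1
  l_eq_zero : ∀ A : Div, deg A < 0 → l A = 0
  /-- the canonical divisor -/
  K : Div
  deg_K : deg K = 2 * (g : ℤ) - 2
  /-- the Riemann–Roch theorem -/
  riemann_roch : ∀ A : Div, (l A : ℤ) - l (K - A) = deg A + 1 - g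
  /-- Clifford's theorem for special divisors -/
  clifford : ∀ A : Div, 1 ≤ l A → 1 ≤ l (K - A) → 2 * ((l A : ℤ) - 1) ≤ deg A
  /-- the divisor of a rational point (so `X(F_q) ≠ ∅`) -/
  P : Div
  deg_P : deg P = 1
  l_le_add_P : ∀ A : Div, l A ≤ l (A + P)
  add_P_le : ∀ A : Div, l (A + P) ≤ l A + 1

attribute [instance] RRCurve.grp

/-- The `i`-th gonality number `γ_i = min{deg A : l(A) ≥ i}` of the curve. -/
noncomputable def RRCurve.gon (X : RRCurve) (i : ℕ) : ℕ :=
  sInf {d : ℕ | ∃ A : X.Div, X.deg A = d ∧ i ≤ X.l A}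

/-- The step function `ℓ̃(a) = max{i ≥ 1 : γ_i ≤ a}`, with `ℓ̃(-1) = 0`. -/
noncomputable def RRCurve.tl (X : RRCurve) (a : ℤ) : ℕ :=
  sSup {i : ℕ | 1 ≤ i ∧ (X.gon i : ℤ) ≤ a}


namespace RRCurveAux

variable (X : RRCurve)

/-- `deg` as an additive monoid hom. -/
def degHom : X.Div →+ ℤ := AddMonoidHom.mk' X.deg X.deg_add

lemma deg_eq (A : X.Div) : X.deg A = degHom X A := rfl

lemma deg_sub (A B : X.Div) : X.deg (A - B) = X.deg A - X.deg B := by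
  simp [deg_eq, map_sub]

lemma exists_deg (a : ℤ) : ∃ A : X.Div, X.deg A = a := by
  refine ⟨a • X.P, ?_⟩
  have hp : degHom X X.P = 1 := X.deg_P
  rw [deg_eq, map_zsmul, hp, smul_eq_mul, mul_one]

lemma l_le_of_deg_lt : ∀ (n : ℕ) (A : X.Div), X.deg A < n → X.l A ≤ n
  | 0, A, h => by
    rw [X.l_eq_zero A (by exact_mod_cast h)]
  | (n+1), A, h => by
    have h1 : X.l ((A - X.P) + X.P) ≤ X.l (A - X.P) + 1 := X.add_P_le _
    rw [sub_add_cancel] at h1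
    have h2 : X.deg (A - X.P) < n := by
      rw [deg_sub, X.deg_P]; push_cast at h ⊢; omega
    have h3 := l_le_of_deg_lt n (A - X.P) h2
    omega

/-- The set of dimensions of divisors of degree `a`. -/
def S (a : ℤ) : Set ℕ := {n | ∃ A : X.Div, X.deg A = a ∧ X.l A = n}

lemma S_nonempty (a : ℤ) : (S X a).Nonempty := by
  obtain ⟨A, hA⟩ := exists_deg X a
  exact ⟨X.l A, A, hA, rfl⟩

lemma S_bddAbove (a : ℤ) : BddAbove (S X a) := by
  refine ⟨(a+1).toNat, fun n hn => ?_⟩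
  obtain ⟨A, hA, rfl⟩ := hn
  apply l_le_of_deg_lt
  rw [hA]
  omega

/-- `f a` is the maximal dimension of a divisor of degree `a`. -/
noncomputable def f (a : ℤ) : ℕ := sSup (S X a)

lemma f_mem (a : ℤ) : ∃ A : X.Div, X.deg A = a ∧ X.l A = f X a :=
  Nat.sSup_mem (S_nonempty X a) (S_bddAbove X a)

lemma le_f {a : ℤ} {A : X.Div} (hA : X.deg A = a) : X.l A ≤ f X a :=
  le_csSup (S_bddAbove X a) ⟨A, hA, rfl⟩

lemma f_neg {a : ℤ} (ha : a < 0) : f X a = 0 := by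
  obtain ⟨A, hA, h⟩ := f_mem X a
  rw [← h]
  exact X.l_eq_zero A (by rw [hA]; exact ha)

lemma f_step_le (a : ℤ) : f X (a-1) ≤ f X a := by
  obtain ⟨B, hB, h⟩ := f_mem X (a-1)
  have h1 : X.l B ≤ X.l (B + X.P) := X.l_le_add_P B
  have h2 : X.deg (B + X.P) = a := by rw [X.deg_add, hB, X.deg_P]; ring
  have h3 := le_f X h2
  omega

lemma f_le_step (a : ℤ) : f X a ≤ f X (a-1) + 1 := by
  obtain ⟨A, hA, h⟩ := f_mem X a
  have h1 : X.l ((A - X.P) + X.P) ≤ X.l (A - X.P) + 1 := X.add_P_le _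
  rw [sub_add_cancel] at h1
  have h2 : X.deg (A - X.P) = a - 1 := by rw [deg_sub, X.deg_P, hA]
  have h3 := le_f X h2
  omega

lemma l_le_l_add_nsmul (A : X.Div) : ∀ n : ℕ, X.l A ≤ X.l (A + n • X.P)
  | 0 => by simp
  | (n+1) => by
    have h1 := l_le_l_add_nsmul A n
    have h2 : X.l (A + n • X.P) ≤ X.l (A + n • X.P + X.P) := X.l_le_add_P _
    have h3 : A + (n+1) • X.P = A + n • X.P + X.P := by
      rw [succ_nsmul, ← add_assoc]
    rw [h3]; omega

lemma gonSet_nonempty (i : ℕ) :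
    {d : ℕ | ∃ A : X.Div, X.deg A = d ∧ i ≤ X.l A}.Nonempty := by
  obtain ⟨A, hA⟩ := exists_deg X ((2 * X.g + i : ℕ) : ℤ)
  have hK : X.deg (X.K - A) < 0 := by
    rw [deg_sub, X.deg_K, hA]; push_cast; omega
  have h0 : X.l (X.K - A) = 0 := X.l_eq_zero _ hK
  have hrr := X.riemann_roch A
  rw [h0, hA] at hrr
  push_cast at hrr
  exact ⟨2 * X.g + i, A, hA, by omega⟩

lemma gon_spec (i : ℕ) : ∃ A : X.Div, X.deg A = (X.gon i : ℤ) ∧ i ≤ X.l A :=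
  Nat.sInf_mem (gonSet_nonempty X i)

lemma gon_le_iff {i : ℕ} (hi : 1 ≤ i) {a : ℤ} (ha : 0 ≤ a) :
    ((X.gon i : ℤ) ≤ a) ↔ i ≤ f X a := by
  constructor
  · intro h
    obtain ⟨A, hA, hl⟩ := gon_spec X i
    have key : X.l A ≤ X.l (A + (a - X.gon i).toNat • X.P) := l_le_l_add_nsmul X A _
    have hdeg : X.deg (A + (a - X.gon i).toNat • X.P) = a := by
      rw [X.deg_add, hA, deg_eq, map_nsmul]
      have hp : degHom X X.P = 1 := X.deg_P
      rw [hp, nsmul_eq_mul, mul_one]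
      omega
    have h2 := le_f X hdeg
    omega
  · intro h
    obtain ⟨A, hA, hl⟩ := f_mem X a
    have h2 : X.gon i ≤ a.toNat :=
      Nat.sInf_le ⟨A, by rw [hA]; omega, by omega⟩
    omega

lemma GS_iff_jump {a : ℤ} (ha : 0 ≤ a) :
    (∃ i : ℕ, 1 ≤ i ∧ (X.gon i : ℤ) = a) ↔ f X (a-1) < f X a := by
  constructor
  · rintro ⟨i, hi, hg⟩
    have h1 : i ≤ f X a := (gon_le_iff X hi ha).1 (le_of_eq hg)
    have h2 : f X (a-1) < i := by
      by_cases h : 0 ≤ a - 1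
      · by_contra hc
        push_neg at hc
        have := (gon_le_iff X hi h).2 hc
        omega
      · have := f_neg X (a := a - 1) (by omega)
        omega
    omega
  · intro h
    refine ⟨f X a, by omega, ?_⟩
    have h1 : (X.gon (f X a) : ℤ) ≤ a := (gon_le_iff X (by omega) ha).2 le_rfl
    have h2 : ¬ ((X.gon (f X a) : ℤ) ≤ a - 1) := by
      by_cases hh : 0 ≤ a - 1
      · intro hc
        have := (gon_le_iff X (by omega) hh).1 hc
        omega
      · intro hc; omega
    omega

lemma f_dual (a : ℤ) : (f X a : ℤ) = f X (2*(X.g:ℤ) - 2 - a) + a + 1 - X.g := by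
  obtain ⟨A, hA, hfa⟩ := f_mem X a
  obtain ⟨B, hB, hfb⟩ := f_mem X (2*(X.g:ℤ) - 2 - a)
  have h1 : X.deg (X.K - A) = 2*(X.g:ℤ) - 2 - a := by rw [deg_sub, X.deg_K, hA]
  have h2 : X.deg (X.K - B) = a := by rw [deg_sub, X.deg_K, hB]; ring
  have hr1 := X.riemann_roch A
  have hr2 := X.riemann_roch B
  rw [hA] at hr1
  rw [hB] at hr2
  have le1 : X.l (X.K - A) ≤ f X (2*(X.g:ℤ) - 2 - a) := le_f X h1
  have le2 : X.l (X.K - B) ≤ f X a := le_f X h2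
  omega

end RRCurveAux

/-- for `0 ≤ a ≤ 2g-1`, `a` is a gonality number if and only if
`2g-1-a` is not a gonality number. -/
theorem gonality_symmetry (X : RRCurve) :
    ∀ a : ℤ, 0 ≤ a → a ≤ 2 * (X.g : ℤ) - 1 →
      ((∃ i : ℕ, 1 ≤ i ∧ (X.gon i : ℤ) = a) ↔
        ¬ (∃ i : ℕ, 1 ≤ i ∧ (X.gon i : ℤ) = 2 * (X.g : ℤ) - 1 - a)) := by
  intro a ha hle
  have hb0 : 0 ≤ 2 * (X.g:ℤ) - 1 - a := by omega
  rw [RRCurveAux.GS_iff_jump X ha, RRCurveAux.GS_iff_jump X hb0]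
  have d1 := RRCurveAux.f_dual X a
  have d2 := RRCurveAux.f_dual X (a-1)
  have m1 := RRCurveAux.f_step_le X (2 * (X.g:ℤ) - 1 - a)
  have m2 := RRCurveAux.f_le_step X (2 * (X.g:ℤ) - 1 - a)
  have e1 : 2*(X.g:ℤ) - 2 - a = (2 * (X.g:ℤ) - 1 - a) - 1 := by ring
  have e2 : 2*(X.g:ℤ) - 2 - (a-1) = 2 * (X.g:ℤ) - 1 - a := by ring
  rw [e1] at d1
  rw [e2] at d2
  omega
end

section
/- With ℓ̃ and R defined from a strictly increasing sequence (γ_i) with γ_1 = 0 as above, for each N with -1 ≤ N ≤ 2g-2 there exists an integer a ≤ N/2 with a ∉ {γ_i} (a is a 'gap', possibly a = -1) such that R(N) = ℓ̃(a) + ℓ̃(N-a). -/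
/-- The step function `ℓ̃(a) = max{i ≥ 1 : γ_i ≤ a}` attached to a
gonality-type sequence `γ` (indexed from `1`); `ℓ̃(a) = 0` for `a < γ_1`,
in particular `ℓ̃(-1) = 0`. -/
noncomputable def tl (γ : ℕ → ℕ) (a : ℤ) : ℕ :=
  sSup {i : ℕ | 1 ≤ i ∧ (γ i : ℤ) ≤ a}

/-- `R(N) = min{ℓ̃(a) + ℓ̃(b) : a, b ≥ -1, a + b = N}`. -/
noncomputable def Rfun (γ : ℕ → ℕ) (N : ℤ) : ℕ :=
  sInf {m : ℕ | ∃ a b : ℤ, -1 ≤ a ∧ -1 ≤ b ∧ a + b = N ∧ m = tl γ a + tl γ b}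

section Aux

variable {γ : ℕ → ℕ}

lemma gmono (hmono : ∀ i : ℕ, 1 ≤ i → γ i < γ (i + 1)) :
    ∀ i j : ℕ, 1 ≤ i → i ≤ j → γ i ≤ γ j := by
  intro i j h1i hij
  induction j with
  | zero => omega
  | succ n ih =>
    rcases Nat.lt_or_ge i (n + 1) with h | h
    · exact le_trans (ih (by omega)) (le_of_lt (hmono n (by omega)))
    · have : i = n + 1 := by omega
      subst this; exact le_rfl

lemma ggrow (hmono : ∀ i : ℕ, 1 ≤ i → γ i < γ (i + 1)) :
    ∀ i : ℕ, 1 ≤ i → i ≤ γ i + 1 := by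
  intro i h
  induction i with
  | zero => omega
  | succ n ih =>
    rcases Nat.lt_or_ge 1 (n + 1) with h' | h'
    · have h1 := ih (by omega)
      have h2 := hmono n (by omega)
      omega
    · omega

lemma tl_bdd (hmono : ∀ i : ℕ, 1 ≤ i → γ i < γ (i + 1)) (a : ℤ) :
    BddAbove {i : ℕ | 1 ≤ i ∧ (γ i : ℤ) ≤ a} := by
  refine ⟨(a + 1).toNat, fun i hi => ?_⟩
  obtain ⟨h1i, hgi⟩ := hi
  have h2 : (i : ℤ) ≤ (γ i : ℤ) + 1 := by exact_mod_cast ggrow hmono i h1i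
  omega

lemma tl_succ (hmono : ∀ i : ℕ, 1 ≤ i → γ i < γ (i + 1)) (b : ℤ) :
    tl γ (b + 1) ≤ tl γ b + 1 := by
  rcases Set.eq_empty_or_nonempty {i : ℕ | 1 ≤ i ∧ (γ i : ℤ) ≤ b + 1} with he | hne
  · unfold tl; rw [he]; simp
  · apply csSup_le hne
    rintro i ⟨h1i, hgi⟩
    rcases Nat.lt_or_ge i 2 with h | h
    · omega
    · have hm : γ (i - 1) < γ i := by
        have := hmono (i - 1) (by omega)
        rwa [Nat.sub_add_cancel (by omega)] at this
      have hm' : (γ (i - 1) : ℤ) < (γ i : ℤ) := by exact_mod_cast hm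
      have hmem : i - 1 ∈ {j : ℕ | 1 ≤ j ∧ (γ j : ℤ) ≤ b} := ⟨by omega, by omega⟩
      have := le_csSup (tl_bdd hmono b) hmem
      have : i - 1 ≤ tl γ b := this
      omega

lemma tl_pred (hmono : ∀ i : ℕ, 1 ≤ i → γ i < γ (i + 1)) (j : ℕ) (hj : 1 ≤ j) :
    tl γ ((γ j : ℤ) - 1) + 1 ≤ tl γ (γ j : ℤ) := by
  have hjmem : j ∈ {i : ℕ | 1 ≤ i ∧ (γ i : ℤ) ≤ (γ j : ℤ)} := ⟨hj, le_rfl⟩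
  have hjle : j ≤ tl γ (γ j : ℤ) := le_csSup (tl_bdd hmono _) hjmem
  have hle : tl γ ((γ j : ℤ) - 1) ≤ j - 1 := by
    rcases Set.eq_empty_or_nonempty {i : ℕ | 1 ≤ i ∧ (γ i : ℤ) ≤ (γ j : ℤ) - 1} with he | hne
    · unfold tl; rw [he]; simp
    · apply csSup_le hne
      rintro i ⟨h1i, hgi⟩
      by_contra hcon
      push_neg at hcon
      have := gmono hmono j i hj (by omega)
      have : (γ j : ℤ) ≤ (γ i : ℤ) := by exact_mod_cast this
      omega
  omega

lemma descend (hmono : ∀ i : ℕ, 1 ≤ i → γ i < γ (i + 1)) :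
    ∀ k : ℕ, ∀ a b : ℤ, (a + 1).toNat ≤ k → -1 ≤ a → -1 ≤ b →
    ∃ a', -1 ≤ a' ∧ a' ≤ a ∧ (∀ i : ℕ, 1 ≤ i → (γ i : ℤ) ≠ a') ∧
      tl γ a' + tl γ (a + b - a') ≤ tl γ a + tl γ b := by
  intro k
  induction k with
  | zero =>
    intro a b hk ha hb
    have haeq : a = -1 := by omega
    subst haeq
    refine ⟨-1, le_rfl, le_rfl, fun i hi => ?_, ?_⟩
    · have : (0 : ℤ) ≤ (γ i : ℤ) := Int.ofNat_nonneg _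
      omega
    · have : (-1 : ℤ) + b - -1 = b := by ring
      rw [this]
  | succ k ih =>
    intro a b hk ha hb
    by_cases hgap : ∀ i : ℕ, 1 ≤ i → (γ i : ℤ) ≠ a
    · refine ⟨a, ha, le_rfl, hgap, ?_⟩
      rw [show a + b - a = b by ring]
    · push_neg at hgap
      obtain ⟨j, hj, hja⟩ := hgap
      have ha0 : (0 : ℤ) ≤ a := hja ▸ Int.ofNat_nonneg _
      obtain ⟨a', h1', h2', h3', h4'⟩ := ih (a - 1) (b + 1) (by omega) (by omega) (by omega)
      refine ⟨a', h1', by omega, h3', ?_⟩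
      rw [show a - 1 + (b + 1) - a' = a + b - a' by ring] at h4'
      have h₁ := tl_pred hmono j hj
      rw [hja] at h₁
      have h₂ := tl_succ hmono b
      omega

end Aux

/-- for each `-1 ≤ N ≤ 2g-2` there is a gap `a ≤ N/2`
(possibly `a = -1`) with `R(N) = ℓ̃(a) + ℓ̃(N-a)`. -/
theorem R_attained_at_gap (g : ℕ) (γ : ℕ → ℕ)
    (hmono : ∀ i : ℕ, 1 ≤ i → γ i < γ (i + 1))
    (h1 : γ 1 = 0) :
    ∀ N : ℤ, -1 ≤ N → N ≤ 2 * (g : ℤ) - 2 →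
      ∃ a : ℤ, -1 ≤ a ∧ 2 * a ≤ N ∧ (∀ i : ℕ, 1 ≤ i → (γ i : ℤ) ≠ a) ∧
        Rfun γ N = tl γ a + tl γ (N - a) := by
  intro N hN1 hN2
  set S := {m : ℕ | ∃ a b : ℤ, -1 ≤ a ∧ -1 ≤ b ∧ a + b = N ∧ m = tl γ a + tl γ b} with hS
  have hSne : S.Nonempty := ⟨tl γ (-1) + tl γ (N + 1), -1, N + 1, le_rfl, by omega, by ring, rfl⟩
  have hmem : Rfun γ N ∈ S := Nat.sInf_mem hSne
  obtain ⟨a, b, ha, hb, hab, heq⟩ := hmem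
  have main : ∀ a b : ℤ, -1 ≤ a → -1 ≤ b → a + b = N → a ≤ b →
      Rfun γ N = tl γ a + tl γ b →
      ∃ a' : ℤ, -1 ≤ a' ∧ 2 * a' ≤ N ∧ (∀ i : ℕ, 1 ≤ i → (γ i : ℤ) ≠ a') ∧
        Rfun γ N = tl γ a' + tl γ (N - a') := by
    intro a b ha hb hab hale heqR
    obtain ⟨a', h1', h2', h3', h4'⟩ := descend hmono ((a + 1).toNat) a b le_rfl ha hb
    have harg : a + b - a' = N - a' := by omega
    rw [harg] at h4'
    refine ⟨a', h1', by omega, h3', ?_⟩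
    have hle1 : tl γ a' + tl γ (N - a') ≤ Rfun γ N := by omega
    have hle2 : Rfun γ N ≤ tl γ a' + tl γ (N - a') := by
      apply Nat.sInf_le
      exact ⟨a', N - a', h1', by omega, by ring, rfl⟩
    omega
  rcases le_total a b with h | h
  · exact main a b ha hb hab h heq
  · refine main b a hb ha (by omega) h ?_
    rw [heq, Nat.add_comm]
end

section
/- Let (γ_i) be the 'hyperelliptic' gonality sequence of genus g ≥ 2: γ_i = 2i-2 for 1 ≤ i ≤ g and γ_i = g+i-1 for i ≥ g+1. Then with ℓ̃ and R defined as above, R(N) = ⌊(N+1)/2⌋ + 1 for all N with -1 ≤ N ≤ 2g-2. -/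
lemma tl_neg_one (γ : ℕ → ℕ) : tl γ (-1) = 0 := by
  have h : {i : ℕ | 1 ≤ i ∧ (γ i : ℤ) ≤ -1} = ∅ := by
    ext i
    simp only [Set.mem_setOf_eq, Set.mem_empty_iff_false, iff_false, not_and]
    intro _ h
    have := Int.natCast_nonneg (γ i)
    omega
  rw [tl, h, csSup_empty]
  rfl

lemma tl_eq (g : ℕ) (γ : ℕ → ℕ) (hg : 2 ≤ g)
    (hγ : ∀ i : ℕ, 1 ≤ i → i ≤ g → (γ i : ℤ) = 2 * (i : ℤ) - 2)
    (hγ' : ∀ i : ℕ, g + 1 ≤ i → (γ i : ℤ) = (g : ℤ) + i - 1)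
    (a : ℤ) (h0 : 0 ≤ a) (h1 : a ≤ 2 * (g : ℤ) - 1) :
    (tl γ a : ℤ) = a / 2 + 1 := by
  set m : ℕ := (a / 2 + 1).toNat with hm
  have hmz : (m : ℤ) = a / 2 + 1 := Int.toNat_of_nonneg (by omega)
  have hmg : (m : ℤ) ≤ (g : ℤ) := by omega
  have h1m : 1 ≤ m := by omega
  have hmg' : m ≤ g := by exact_mod_cast hmg
  have hgreat : IsGreatest {i : ℕ | 1 ≤ i ∧ (γ i : ℤ) ≤ a} m := by
    constructor
    · refine ⟨h1m, ?_⟩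
      rw [hγ m h1m hmg']
      omega
    · rintro i ⟨hi1, hi2⟩
      by_cases hig : i ≤ g
      · rw [hγ i hi1 hig] at hi2
        omega
      · rw [hγ' i (by omega)] at hi2
        omega
  rw [tl, hgreat.csSup_eq, hmz]

/-- for the hyperelliptic gonality sequence of genus `g ≥ 2`
(`γ_i = 2i-2` for `1 ≤ i ≤ g`, `γ_i = g+i-1` for `i ≥ g+1`),
`R(N) = ⌊(N+1)/2⌋ + 1` for all `-1 ≤ N ≤ 2g-2`. -/
theorem R_hyperelliptic (g : ℕ) (γ : ℕ → ℕ) (hg : 2 ≤ g)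
    (hγ : ∀ i : ℕ, 1 ≤ i → i ≤ g → (γ i : ℤ) = 2 * (i : ℤ) - 2)
    (hγ' : ∀ i : ℕ, g + 1 ≤ i → (γ i : ℤ) = (g : ℤ) + i - 1) :
    ∀ N : ℤ, -1 ≤ N → N ≤ 2 * (g : ℤ) - 2 →
      (Rfun γ N : ℤ) = (N + 1) / 2 + 1 := by
  intro N hN1 hN2
  have htl1 : (tl γ (N + 1) : ℤ) = (N + 1) / 2 + 1 :=
    tl_eq g γ hg hγ hγ' _ (by omega) (by omega)
  have hmem : tl γ (N + 1) ∈
      {m : ℕ | ∃ a b : ℤ, -1 ≤ a ∧ -1 ≤ b ∧ a + b = N ∧ m = tl γ a + tl γ b} :=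
    ⟨-1, N + 1, by norm_num, by omega, by ring, by rw [tl_neg_one, zero_add]⟩
  have hRfun : Rfun γ N = tl γ (N + 1) := by
    refine le_antisymm (Nat.sInf_le hmem) (le_csInf ⟨_, hmem⟩ ?_)
    rintro m ⟨a, b, ha, hb, hab, rfl⟩
    rcases eq_or_lt_of_le ha with ha' | ha'
    · have hb' : b = N + 1 := by omega
      rw [← ha', hb', tl_neg_one, zero_add]
    rcases eq_or_lt_of_le hb with hb' | hb'
    · have ha'' : a = N + 1 := by omega
      rw [← hb', ha'', tl_neg_one, add_zero]
    · have ha0 : 0 ≤ a := by omega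
      have hb0 : 0 ≤ b := by omega
      have hta : (tl γ a : ℤ) = a / 2 + 1 :=
        tl_eq g γ hg hγ hγ' a ha0 (by omega)
      have htb : (tl γ b : ℤ) = b / 2 + 1 :=
        tl_eq g γ hg hγ hγ' b hb0 (by omega)
      have : (tl γ (N + 1) : ℤ) ≤ (tl γ a : ℤ) + (tl γ b : ℤ) := by
        rw [htl1, hta, htb]
        omega
      exact_mod_cast this
  rw [hRfun, htl1]
end

section
/- Let S = ⟨r, r+1⟩ with r ≥ 2, genus g = r(r-1)/2, ℓ̃(a) = #{s ∈ S : s ≤ a} (with ℓ̃(-1) = 0), and R(N) = min{ℓ̃(a)+ℓ̃(N-a) : a, N-a ≥ -1} for -1 ≤ N ≤ 2g-2. Then |{N ∈ [0,2g-2] : R(N) > R(N-1)}| + 1 = R(2g-2), and R(2g-2) = r²/4 if r is even and R(2g-2) = (r²-1)/4 if r is odd. -/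
/-- The numerical semigroup generated by `r` and `r+1`. -/
def sgen (r : ℕ) : Set ℕ := {a | ∃ x y : ℕ, a = x * r + y * (r + 1)}

/-- `ℓ̃(a) = #{s ∈ ⟨r, r+1⟩ : s ≤ a}` (so `ℓ̃(-1) = 0`). -/
noncomputable def tlS (r : ℕ) (a : ℤ) : ℕ := {s : ℕ | s ∈ sgen r ∧ (s : ℤ) ≤ a}.ncard

/-- `R(N) = min{ℓ̃(a) + ℓ̃(b) : a, b ≥ -1, a + b = N}` for the semigroup `⟨r, r+1⟩`. -/
noncomputable def RS (r : ℕ) (N : ℤ) : ℕ :=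
  sInf {m : ℕ | ∃ a b : ℤ, -1 ≤ a ∧ -1 ≤ b ∧ a + b = N ∧ m = tlS r a + tlS r b}

def tri : ℕ → ℕ
  | 0 => 0
  | n+1 => tri n + (n+1)

lemma tri_two_mul (n : ℕ) : 2 * tri n = n * (n + 1) := by
  induction n with
  | zero => rfl
  | succ k ih => simp only [tri]; ring_nf; ring_nf at ih; omega

lemma sgen_mem {r q t : ℕ} (ht : t ≤ q) : q * r + t ∈ sgen r := by
  obtain ⟨c, rfl⟩ : ∃ c, q = t + c := ⟨q - t, by omega⟩
  exact ⟨c, t, by ring⟩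

lemma sgen_mem_iff {r q t : ℕ} (hr : 2 ≤ r) (hq : q ≤ r - 1) (ht : t ≤ r - 1) :
    q * r + t ∈ sgen r ↔ t ≤ q := by
  constructor
  · rintro ⟨x, y, hxy⟩
    -- q*r + t = (x+y)*r + y
    have hbound : q * r + t < r * r := by
      have h1 : q * r ≤ (r-1) * r := Nat.mul_le_mul_right _ hq
      have : (r-1) * r + t < r * r := by nlinarith [Nat.sub_add_cancel (by omega : 1 ≤ r)]
      omega
    have hy : y < r := by
      by_contra h
      push_neg at h
      have : r * (r+1) ≤ y * (r+1) := Nat.mul_le_mul_right _ h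
      nlinarith
    have heq : (x + y) * r + y = q * r + t := by rw [hxy]; ring
    have ht' : t < r := by omega
    rcases lt_trichotomy (x + y) q with hlt | heq2 | hgt
    · exfalso
      have h1 : (x + y + 1) * r ≤ q * r := Nat.mul_le_mul_right r (by omega)
      have h2 : (x + y + 1) * r = (x + y) * r + r := by ring
      omega
    · rw [heq2] at heq; omega
    · exfalso
      have h1 : (q + 1) * r ≤ (x + y) * r := Nat.mul_le_mul_right r (by omega)
      have h2 : (q + 1) * r = q * r + r := by ring
      omega
  · intro h; exact sgen_mem h

lemma tlS_finite (r : ℕ) (a : ℤ) : {s : ℕ | s ∈ sgen r ∧ (s : ℤ) ≤ a}.Finite := by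
  apply Set.Finite.subset (Set.finite_Iic a.toNat)
  rintro s ⟨-, hs⟩
  simp only [Set.mem_Iic]
  omega

lemma tlS_neg {r : ℕ} {a : ℤ} (h : a ≤ -1) : tlS r a = 0 := by
  unfold tlS
  have h0 : {s : ℕ | s ∈ sgen r ∧ (s : ℤ) ≤ a} = ∅ := by
    ext s
    simp only [Set.mem_setOf_eq, Set.mem_empty_iff_false, iff_false, not_and]
    intro _
    omega
  rw [h0, Set.ncard_empty]

lemma tlS_zero {r : ℕ} : tlS r 0 = 1 := by
  unfold tlS
  have : {s : ℕ | s ∈ sgen r ∧ (s : ℤ) ≤ 0} = {0} := by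
    ext s
    simp only [Set.mem_setOf_eq, Set.mem_singleton_iff]
    constructor
    · rintro ⟨-, h⟩; omega
    · rintro rfl; exact ⟨⟨0, 0, by ring⟩, by norm_num⟩
  rw [this, Set.ncard_singleton]

lemma tlS_mono {r : ℕ} {a b : ℤ} (h : a ≤ b) : tlS r a ≤ tlS r b := by
  apply Set.ncard_le_ncard _ (tlS_finite r b)
  rintro s ⟨h1, h2⟩; exact ⟨h1, by omega⟩

lemma tlS_succ_mem {r n : ℕ} (h : (n+1) ∈ sgen r) :
    tlS r ((n:ℤ)+1) = tlS r n + 1 := by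
  unfold tlS
  have : {s : ℕ | s ∈ sgen r ∧ (s : ℤ) ≤ (n:ℤ)+1} =
      insert (n+1) {s : ℕ | s ∈ sgen r ∧ (s : ℤ) ≤ n} := by
    ext s
    simp only [Set.mem_setOf_eq, Set.mem_insert_iff]
    constructor
    · rintro ⟨h1, h2⟩
      rcases eq_or_ne s (n+1) with rfl | hne
      · exact Or.inl rfl
      · exact Or.inr ⟨h1, by omega⟩
    · rintro (rfl | ⟨h1, h2⟩)
      · exact ⟨h, by omega⟩
      · exact ⟨h1, by omega⟩
  rw [this, Set.ncard_insert_of_notMem _ (tlS_finite r n)]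
  rintro ⟨-, h2⟩; omega

lemma tlS_succ_not_mem {r n : ℕ} (h : (n+1) ∉ sgen r) :
    tlS r ((n:ℤ)+1) = tlS r n := by
  unfold tlS
  congr 1
  ext s
  simp only [Set.mem_setOf_eq]
  constructor
  · rintro ⟨h1, h2⟩
    refine ⟨h1, ?_⟩
    rcases eq_or_ne s (n+1) with rfl | hne
    · exact absurd h1 h
    · omega
  · rintro ⟨h1, h2⟩; exact ⟨h1, by omega⟩

lemma tlS_le_succ {r : ℕ} (a : ℤ) : tlS r (a + 1) ≤ tlS r a + 1 := by
  rcases le_or_gt (a+1) (-1) with h | h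
  · rw [tlS_neg h]; omega
  rcases le_or_gt a (-1) with h2 | h2
  · have : a + 1 = 0 := by omega
    rw [this, tlS_zero]; omega
  · unfold tlS
    have hsub : {s : ℕ | s ∈ sgen r ∧ (s : ℤ) ≤ a + 1} ⊆
        insert (a+1).toNat {s : ℕ | s ∈ sgen r ∧ (s : ℤ) ≤ a} := by
      rintro s ⟨h1, hs⟩
      rcases le_or_gt (s:ℤ) a with h3 | h3
      · exact Set.mem_insert_of_mem _ ⟨h1, h3⟩
      · left; omega
    calc {s : ℕ | s ∈ sgen r ∧ (s : ℤ) ≤ a + 1}.ncard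
        ≤ (insert (a+1).toNat {s : ℕ | s ∈ sgen r ∧ (s : ℤ) ≤ a}).ncard :=
          Set.ncard_le_ncard hsub ((tlS_finite r a).insert _)
      _ ≤ _ := Set.ncard_insert_le _ _

lemma tlS_formula {r : ℕ} (hr : 2 ≤ r) :
    ∀ q t, q ≤ r - 1 → t ≤ r - 1 → tlS r ((q * r + t : ℕ) : ℤ) = tri q + min t q + 1 := by
  intro q
  induction q with
  | zero =>
    intro t
    induction t with
    | zero => intro _ _; simpa [tri] using tlS_zero
    | succ t iht =>
      intro _ ht
      have hns : (t + 1) ∉ sgen r := by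
        have := (sgen_mem_iff (q := 0) (t := t+1) hr (by omega) ht)
        simp only [Nat.zero_mul, Nat.zero_add] at this
        rw [this]; omega
      have hc : ((0 * r + (t+1) : ℕ) : ℤ) = ((t : ℕ) : ℤ) + 1 := by push_cast; ring
      rw [hc, tlS_succ_not_mem hns]
      have := iht (by omega) (by omega)
      simp only [Nat.zero_mul, Nat.zero_add] at this ⊢
      rw [this]
      omega
  | succ q ihq =>
    intro t
    induction t with
    | zero =>
      intro hq _
      have hmem : (q * r + (r - 1) + 1) ∈ sgen r := by
        have h1 : q * r + (r - 1) + 1 = (q + 1) * r + 0 := by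
          have : (q + 1) * r = q * r + r := by ring
          omega
        rw [h1]
        exact sgen_mem (by omega)
      have hc : (((q+1) * r + 0 : ℕ) : ℤ) = ((q * r + (r-1) : ℕ) : ℤ) + 1 := by
        have h1 : (q + 1) * r = q * r + r := by ring
        have h2 : 1 ≤ r := by omega
        push_cast [h1]
        omega
      rw [hc, tlS_succ_mem hmem]
      rw [ihq (r-1) (by omega) (by omega)]
      have h3 : min (r-1) q = q := by omega
      have h4 : min 0 (q+1) = 0 := by omega
      rw [h3, h4]
      show tri q + q + 1 + 1 = tri q + (q + 1) + 0 + 1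
      omega
    | succ t iht =>
      intro hq ht
      have hc : (((q+1) * r + (t+1) : ℕ) : ℤ) = (((q+1) * r + t : ℕ) : ℤ) + 1 := by
        push_cast; ring
      have hiff := sgen_mem_iff (q := q+1) (t := t+1) hr hq ht
      have hprev := iht hq (by omega)
      rcases le_or_gt (t+1) (q+1) with hle | hgt
      · have hmem : ((q+1) * r + t + 1) ∈ sgen r := by
          have : (q+1) * r + t + 1 = (q+1) * r + (t+1) := by omega
          rw [this, hiff]; exact hle
        rw [hc, tlS_succ_mem hmem, hprev]
        omega
      · have hmem : ((q+1) * r + t + 1) ∉ sgen r := by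
          have h5 : (q+1) * r + t + 1 = (q+1) * r + (t+1) := by omega
          rw [h5, hiff]; omega
        rw [hc, tlS_succ_not_mem hmem, hprev]
        omega

lemma RS_le {r : ℕ} {N a b : ℤ} (ha : -1 ≤ a) (hb : -1 ≤ b) (hab : a + b = N) :
    RS r N ≤ tlS r a + tlS r b :=
  Nat.sInf_le ⟨a, b, ha, hb, hab, rfl⟩


lemma RS_nonempty (r : ℕ) {N : ℤ} (h : -1 ≤ N) :
    {m : ℕ | ∃ a b : ℤ, -1 ≤ a ∧ -1 ≤ b ∧ a + b = N ∧ m = tlS r a + tlS r b}.Nonempty :=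
  ⟨tlS r (-1) + tlS r (N+1), -1, N+1, le_refl _, by omega, by ring, rfl⟩

lemma RS_spec (r : ℕ) {N : ℤ} (h : -1 ≤ N) :
    ∃ a b : ℤ, -1 ≤ a ∧ -1 ≤ b ∧ a + b = N ∧ RS r N = tlS r a + tlS r b := by
  have := Nat.sInf_mem (RS_nonempty r h)
  obtain ⟨a, b, ha, hb, hab, heq⟩ := this
  exact ⟨a, b, ha, hb, hab, heq⟩

lemma le_RS {r : ℕ} {N : ℤ} {v : ℕ} (h : -1 ≤ N)
    (hv : ∀ a b : ℤ, -1 ≤ a → -1 ≤ b → a + b = N → v ≤ tlS r a + tlS r b) :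
    v ≤ RS r N := by
  apply le_csInf (RS_nonempty r h)
  rintro m ⟨a, b, ha, hb, hab, rfl⟩
  exact hv a b ha hb hab

lemma RS_neg_one (r : ℕ) : RS r (-1) = 1 := by
  apply le_antisymm
  · have h := RS_le (r := r) (N := -1) (a := -1) (b := 0) (by norm_num) (by norm_num) (by ring)
    rwa [tlS_neg le_rfl, tlS_zero] at h
  · apply le_RS (by norm_num)
    intro a b ha hb hab
    have : (a = -1 ∧ b = 0) ∨ (a = 0 ∧ b = -1) := by omega
    rcases this with ⟨rfl, rfl⟩ | ⟨rfl, rfl⟩ <;>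
      rw [tlS_neg le_rfl, tlS_zero]

lemma RS_mono {r : ℕ} {N : ℤ} (h : 0 ≤ N) : RS r (N - 1) ≤ RS r N := by
  apply le_RS (by omega)
  intro a b ha hb hab
  have hcase : 0 ≤ a ∨ 0 ≤ b := by omega
  rcases hcase with h0 | h0
  · calc RS r (N-1) ≤ tlS r (a-1) + tlS r b := RS_le (by omega) hb (by omega)
      _ ≤ tlS r a + tlS r b := Nat.add_le_add_right (tlS_mono (by omega)) _
  · calc RS r (N-1) ≤ tlS r a + tlS r (b-1) := RS_le ha (by omega) (by omega)
      _ ≤ tlS r a + tlS r b := Nat.add_le_add_left (tlS_mono (by omega)) _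

lemma RS_step {r : ℕ} {N : ℤ} (h : 0 ≤ N) : RS r N ≤ RS r (N - 1) + 1 := by
  obtain ⟨a, b, ha, hb, hab, heq⟩ := RS_spec r (N := N - 1) (by omega)
  calc RS r N ≤ tlS r (a+1) + tlS r b := RS_le (by omega) hb (by omega)
    _ ≤ tlS r a + 1 + tlS r b := Nat.add_le_add_right (tlS_le_succ a) _
    _ = RS r (N-1) + 1 := by omega

lemma four_le_of_int {V X : ℕ} (h : (4*V:ℤ) ≤ 4*X) : V ≤ X := by
  have : 4*V ≤ 4*X := by exact_mod_cast h
  omega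

lemma case1_bound (s q q' V : ℕ) (hqq : q + q' = s) (hV : (4*V:ℤ) ≤ ((s:ℤ)+2)^2) :
    V ≤ tri q + tri q' + min q q' + 2 := by
  have h2q : (2*tri q : ℤ) = q*(q+1) := by exact_mod_cast tri_two_mul q
  have h2q' : (2*tri q' : ℤ) = q'*(q'+1) := by exact_mod_cast tri_two_mul q'
  have hs : (q:ℤ) + q' = s := by exact_mod_cast hqq
  apply four_le_of_int
  push_cast
  rcases le_total q q' with h | h
  · have hm : (min q q' : ℤ) = q := by omega
    rw [hm]
    nlinarith [sq_nonneg ((q':ℤ) - q - 1)]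
  · have hm : (min q q' : ℤ) = q' := by omega
    rw [hm]
    nlinarith [sq_nonneg ((q:ℤ) - q' - 1)]

lemma case2_bound (s q q' V : ℕ) (hqq : q + q' + 1 = s) (hV : (4*V:ℤ) ≤ ((s:ℤ)+2)^2)
    (hpar : (4*V:ℤ) = ((s:ℤ)+2)^2 → s % 2 = 0) :
    V ≤ tri q + tri q' + (q + q') + 2 := by
  have h2q : (2*tri q : ℤ) = q*(q+1) := by exact_mod_cast tri_two_mul q
  have h2q' : (2*tri q' : ℤ) = q'*(q'+1) := by exact_mod_cast tri_two_mul q'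
  have hs : (q:ℤ) + q' + 1 = s := by exact_mod_cast hqq
  apply four_le_of_int
  push_cast
  rcases lt_or_eq_of_le hV with h | h
  · nlinarith [sq_nonneg ((q:ℤ) - q')]
  · have hse : s % 2 = 0 := hpar h
    have hne : q ≠ q' := by omega
    have habs : (1:ℤ) ≤ |(q:ℤ) - q'| := Int.one_le_abs (by
      intro hc
      apply hne
      have : (q:ℤ) = q' := by omega
      exact_mod_cast this)
    have hsq : (1:ℤ) ≤ ((q:ℤ) - q')^2 := by
      have := sq_abs ((q:ℤ) - q')
      nlinarith
    nlinarith

lemma tlS_lower_bound {s : ℕ} (V : ℕ) (hV : (4*V:ℤ) ≤ ((s:ℤ)+2)^2)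
    (hpar : (4*V:ℤ) = ((s:ℤ)+2)^2 → s % 2 = 0)
    (a b : ℤ) (ha : -1 ≤ a) (hb : -1 ≤ b)
    (hab : a + b = ((s:ℤ)+2)^2 - (s+2) - 2) :
    V ≤ tlS (s+2) a + tlS (s+2) b := by
  set r : ℕ := s + 2 with hrdef
  have hr : 2 ≤ r := by omega
  -- the full-sum edge case
  have hedge : ∀ c : ℤ, c = ((s:ℤ)+2)^2 - (s+2) - 1 → V ≤ tlS r c := by
    intro c hc
    have hcast : ((s * r + (s+1) : ℕ) : ℤ) = c := by
      rw [hc, hrdef]; push_cast; ring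
    rw [← hcast, tlS_formula hr s (s+1) (by omega) (by omega)]
    have hm : min (s+1) s = s := by omega
    rw [hm]
    have h2 : (2*tri s : ℤ) = s*(s+1) := by exact_mod_cast tri_two_mul s
    apply four_le_of_int
    push_cast
    nlinarith [sq_nonneg (s:ℤ)]
  rcases eq_or_lt_of_le ha with h1 | h1
  · rw [← h1, tlS_neg le_rfl]
    simp only [Nat.zero_add, zero_add]
    exact hedge b (by omega)
  rcases eq_or_lt_of_le hb with h2 | h2
  · rw [← h2, tlS_neg le_rfl]
    have := hedge a (by omega)
    omega
  -- both nonneg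
  have ha0 : 0 ≤ a := by omega
  have hb0 : 0 ≤ b := by omega
  set A := a.toNat with hA
  set B := b.toNat with hB
  have hAa : (A:ℤ) = a := by omega
  have hBb : (B:ℤ) = b := by omega
  have hABn : A + B = s * r + s := by
    have : ((A + B : ℕ) : ℤ) = ((s * r + s : ℕ) : ℤ) := by
      push_cast
      rw [hAa, hBb, hab]
      rw [hrdef]; push_cast; ring
    exact_mod_cast this
  -- decompose A and B
  have hrpos : 0 < r := by omega
  obtain ⟨q, t, hAe, htr⟩ : ∃ q t, A = q * r + t ∧ t < r :=
    ⟨A / r, A % r, by rw [Nat.mul_comm]; exact (Nat.div_add_mod A r).symm, Nat.mod_lt _ hrpos⟩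
  obtain ⟨q', t', hBe, ht'r⟩ : ∃ q t, B = q * r + t ∧ t < r :=
    ⟨B / r, B % r, by rw [Nat.mul_comm]; exact (Nat.div_add_mod B r).symm, Nat.mod_lt _ hrpos⟩
  have hqs : q ≤ s := by
    by_contra hc
    push_neg at hc
    have h1 : (s+1) * r ≤ q * r := Nat.mul_le_mul_right r hc
    have h2 : (s+1) * r = s * r + r := by ring
    omega
  have hq's : q' ≤ s := by
    by_contra hc
    push_neg at hc
    have h1 : (s+1) * r ≤ q' * r := Nat.mul_le_mul_right r hc
    have h2 : (s+1) * r = s * r + r := by ring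
    omega
  -- rewrite tlS via formula
  have hfa : tlS r a = tri q + min t q + 1 := by
    rw [← hAa, hAe]
    exact_mod_cast tlS_formula hr q t (by omega) (by omega)
  have hfb : tlS r b = tri q' + min t' q' + 1 := by
    rw [← hBb, hBe]
    exact_mod_cast tlS_formula hr q' t' (by omega) (by omega)
  rw [hfa, hfb]
  -- the main equation
  have hmain : q * r + t + (q' * r + t') = s * r + s := by omega
  have hσ : q + q' = s ∨ q + q' + 1 = s := by
    have hle : q + q' ≤ s := by
      by_contra hc
      push_neg at hc
      have h1 : (s+1) * r ≤ (q + q') * r := Nat.mul_le_mul_right r hc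
      have h2 : (s+1) * r = s * r + r := by ring
      have h3 : (q + q') * r = q * r + q' * r := by ring
      omega
    by_contra hc
    push_neg at hc
    have hc2 : q + q' + 2 ≤ s := by omega
    have h1 : (q + q' + 2) * r ≤ s * r := Nat.mul_le_mul_right r hc2
    have h2 : (q + q' + 2) * r = q * r + q' * r + 2 * r := by ring
    omega
  rcases hσ with hσ | hσ
  · -- t + t' = s
    have he : q * r + q' * r = s * r := by rw [← add_mul, hσ]
    have htt : t + t' = s := by omega
    have hmins : min q q' ≤ min t q + min t' q' := by omega
    have := case1_bound s q q' V hσ hV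
    omega
  · -- t = t' = r - 1
    have he : q * r + q' * r + r = s * r := by
      have : (q + q' + 1) * r = s * r := by rw [hσ]
      linarith [this, (by ring : (q + q' + 1) * r = q * r + q' * r + r)]
    have htt : t + t' = s + r := by omega
    have htv : t = s + 1 ∧ t' = s + 1 := by omega
    have hminq : min t q = q := by omega
    have hminq' : min t' q' = q' := by omega
    rw [hminq, hminq']
    have := case2_bound s q q' V hσ hV hpar
    omega

lemma sq_cast_nonneg_aux (s : ℕ) : (-1:ℤ) ≤ ((s:ℤ)+2)^2 - ((s:ℤ)+2) - 2 := by
  nlinarith [sq_nonneg ((s:ℤ)+1), Int.ofNat_nonneg s]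

lemma RS_value (s : ℕ) :
    RS (s+2) (((s:ℤ)+2)^2 - ((s:ℤ)+2) - 2) =
      if (s+2) % 2 = 0 then (s+2)^2/4 else ((s+2)^2-1)/4 := by
  obtain ⟨u, hu⟩ : ∃ u, s = 2*u ∨ s = 2*u+1 := ⟨s/2, by omega⟩
  rcases hu with hu | hu
  · -- even case, V = (u+1)^2
    have h4V : (4*((u+1)^2 : ℕ) : ℤ) = ((s:ℤ)+2)^2 := by subst hu; push_cast; ring
    have hVval : (if (s+2) % 2 = 0 then (s+2)^2/4 else ((s+2)^2-1)/4) = (u+1)^2 := by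
      rw [if_pos (by omega)]
      have h1 : (s+2)^2 = 4*(u+1)^2 := by subst hu; ring
      rw [h1, Nat.mul_div_cancel_left _ (by norm_num)]
    rw [hVval]
    apply le_antisymm
    · -- upper bound
      rcases Nat.eq_zero_or_pos u with hu0 | hupos
      · subst hu0
        have hN : ((s:ℤ)+2)^2 - ((s:ℤ)+2) - 2 = -1 + 1 := by subst hu; norm_num
        rw [hN]
        have h := RS_le (r := s+2) (a := -1) (b := 1) (by norm_num) (by norm_num) rfl
        have h1 : tlS (s+2) 1 = 1 := by
          have := tlS_formula (r := s+2) (by omega) 0 1 (by omega) (by omega)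
          simp only [Nat.zero_mul, Nat.zero_add, Nat.cast_one] at this
          rw [this]
          rfl
        rw [tlS_neg le_rfl, h1] at h
        omega
      · obtain ⟨w, rfl⟩ : ∃ w, u = w + 1 := ⟨u - 1, by omega⟩
        set a : ℤ := (((w+1)*(s+2) + (s+1) : ℕ) : ℤ) with hadef
        set b : ℤ := ((w*(s+2) + (s+1) : ℕ) : ℤ) with hbdef
        have hab : a + b = ((s:ℤ)+2)^2 - ((s:ℤ)+2) - 2 := by
          rw [hadef, hbdef]; subst hu; push_cast; ring
        have h := RS_le (r := s+2)
          (ha := by rw [hadef]; linarith [Int.ofNat_nonneg ((w+1)*(s+2) + (s+1))])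
          (hb := by rw [hbdef]; linarith [Int.ofNat_nonneg (w*(s+2) + (s+1))]) hab
        have hfa : tlS (s+2) a = tri (w+1) + (w+1) + 1 := by
          rw [hadef, tlS_formula (by omega) (w+1) (s+1) (by omega) (by omega)]
          congr 1
          omega
        have hfb : tlS (s+2) b = tri w + w + 1 := by
          rw [hbdef, tlS_formula (by omega) w (s+1) (by omega) (by omega)]
          congr 1
          omega
        rw [hfa, hfb] at h
        refine le_trans h (le_of_eq ?_)
        have h2 := tri_two_mul w
        have hx : (w+1+1)^2 = w*w + 4*w + 4 := by ring
        have hy : w*(w+1) = w*w + w := by ring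
        have hz : tri (w+1) = tri w + (w+1) := rfl
        obtain ⟨W, hW⟩ : ∃ W, w*w = W := ⟨_, rfl⟩
        rw [hW] at hx hy
        omega
    · apply le_RS (sq_cast_nonneg_aux s)
      intro a b ha hb hab
      exact tlS_lower_bound _ (le_of_eq h4V) (fun _ => by omega) a b ha hb hab
  · -- odd case, V = (u+1)*(u+2)
    have h4V : (4*((u+1)*(u+2) : ℕ) : ℤ) = ((s:ℤ)+2)^2 - 1 := by subst hu; push_cast; ring
    have hVval : (if (s+2) % 2 = 0 then (s+2)^2/4 else ((s+2)^2-1)/4) = (u+1)*(u+2) := by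
      rw [if_neg (by omega)]
      have h1 : (s+2)^2 = 4*((u+1)*(u+2)) + 1 := by subst hu; ring
      rw [h1, Nat.add_sub_cancel, Nat.mul_div_cancel_left _ (by norm_num)]
    rw [hVval]
    apply le_antisymm
    · set a : ℤ := ((u*(s+2) + (s+1) : ℕ) : ℤ) with hadef
      have hab : a + a = ((s:ℤ)+2)^2 - ((s:ℤ)+2) - 2 := by
        rw [hadef]; subst hu; push_cast; ring
      have h := RS_le (r := s+2)
        (ha := by rw [hadef]; linarith [Int.ofNat_nonneg (u*(s+2) + (s+1))])
        (hb := by rw [hadef]; linarith [Int.ofNat_nonneg (u*(s+2) + (s+1))]) hab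
      have hfa : tlS (s+2) a = tri u + u + 1 := by
        rw [hadef, tlS_formula (by omega) u (s+1) (by omega) (by omega)]
        congr 1
        omega
      rw [hfa] at h
      refine le_trans h (le_of_eq ?_)
      have h2 := tri_two_mul u
      have hx : (u+1)*(u+2) = u*u + 3*u + 2 := by ring
      have hy : u*(u+1) = u*u + u := by ring
      obtain ⟨W, hW⟩ : ∃ W, u*u = W := ⟨_, rfl⟩
      rw [hW] at hx hy
      omega
    · apply le_RS (sq_cast_nonneg_aux s)
      intro a b ha hb hab
      refine tlS_lower_bound _ (by omega) ?_ a b ha hb hab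
      intro h
      omega

lemma jump_finite (r : ℕ) (M : ℤ) :
    {N : ℤ | 0 ≤ N ∧ N ≤ M ∧ RS r (N - 1) < RS r N}.Finite := by
  apply Set.Finite.subset (Set.finite_Icc 0 M)
  rintro N ⟨h1, h2, -⟩
  exact Set.mem_Icc.mpr ⟨h1, h2⟩

lemma jump_count (r : ℕ) (k : ℕ) :
    ({N : ℤ | 0 ≤ N ∧ N ≤ (k:ℤ) - 1 ∧ RS r (N - 1) < RS r N}).ncard + 1
      = RS r ((k:ℤ) - 1) := by
  induction k with
  | zero =>
    have hset : {N : ℤ | 0 ≤ N ∧ N ≤ ((0:ℕ):ℤ) - 1 ∧ RS r (N - 1) < RS r N} = ∅ := by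
      ext N
      simp only [Set.mem_setOf_eq, Set.mem_empty_iff_false, iff_false, not_and]
      intro h1 h2
      omega
    rw [hset, Set.ncard_empty]
    have h0 : ((0:ℕ):ℤ) - 1 = -1 := by norm_num
    rw [h0, RS_neg_one]
  | succ k ih =>
    have hk1 : ((k+1:ℕ):ℤ) - 1 = (k:ℤ) := by push_cast; ring
    rw [hk1]
    have hmono := RS_mono (r := r) (N := (k:ℤ)) (by omega)
    have hstep := RS_step (r := r) (N := (k:ℤ)) (by omega)
    rcases eq_or_lt_of_le hmono with heq | hlt
    · have hset : {N : ℤ | 0 ≤ N ∧ N ≤ (k:ℤ) ∧ RS r (N - 1) < RS r N}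
          = {N : ℤ | 0 ≤ N ∧ N ≤ (k:ℤ) - 1 ∧ RS r (N - 1) < RS r N} := by
        ext N
        simp only [Set.mem_setOf_eq]
        constructor
        · rintro ⟨h1, h2, h3⟩
          refine ⟨h1, ?_, h3⟩
          rcases eq_or_lt_of_le h2 with rfl | h4
          · omega
          · omega
        · rintro ⟨h1, h2, h3⟩
          exact ⟨h1, by omega, h3⟩
      rw [hset, ih, ← heq]
    · have hRS : RS r (k:ℤ) = RS r ((k:ℤ) - 1) + 1 := by omega
      have hset : {N : ℤ | 0 ≤ N ∧ N ≤ (k:ℤ) ∧ RS r (N - 1) < RS r N}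
          = insert (k:ℤ) {N : ℤ | 0 ≤ N ∧ N ≤ (k:ℤ) - 1 ∧ RS r (N - 1) < RS r N} := by
        ext N
        simp only [Set.mem_setOf_eq, Set.mem_insert_iff]
        constructor
        · rintro ⟨h1, h2, h3⟩
          rcases eq_or_lt_of_le h2 with rfl | h4
          · exact Or.inl rfl
          · exact Or.inr ⟨h1, by omega, h3⟩
        · rintro (rfl | ⟨h1, h2, h3⟩)
          · exact ⟨by omega, le_refl _, hlt⟩
          · exact ⟨h1, by omega, h3⟩
      rw [hset, Set.ncard_insert_of_notMem _ (jump_finite r _), ih, hRS]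
      rintro ⟨-, h2, -⟩
      omega


/-- for `S = ⟨r, r+1⟩` of genus `g = r(r-1)/2`, the number of
jumps of `R` in `[0, 2g-2]` plus one equals `R(2g-2)`, and
`R(2g-2) = r²/4` if `r` is even, `(r²-1)/4` if `r` is odd. -/
theorem RS_jumps_and_value (r g : ℕ) (hr : 2 ≤ r) (hg : g = r * (r - 1) / 2) :
    ({N : ℤ | 0 ≤ N ∧ N ≤ 2 * (g : ℤ) - 2 ∧ RS r (N - 1) < RS r N}).ncard + 1 =
        RS r (2 * (g : ℤ) - 2) ∧
      RS r (2 * (g : ℤ) - 2) = (if r % 2 = 0 then r ^ 2 / 4 else (r ^ 2 - 1) / 4) := by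
  have hP : 2 ≤ r * (r - 1) := by
    calc 2 = 2 * 1 := by norm_num
    _ ≤ r * (r - 1) := Nat.mul_le_mul hr (by omega)
  have hdvd : 2 ∣ r * (r - 1) := by
    rcases Nat.even_or_odd r with h | h
    · exact Dvd.dvd.mul_right h.two_dvd _
    · obtain ⟨u, hu⟩ := h
      exact Dvd.dvd.mul_left (⟨u, by omega⟩ : 2 ∣ (r - 1)) _
  have h2g : 2 * g = r * (r - 1) := by rw [hg]; exact Nat.mul_div_cancel' hdvd
  have hg1 : 1 ≤ g := by omega
  have hcast : 2 * (g:ℤ) - 2 = ((r:ℤ))^2 - r - 2 := by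
    have h3 : ((2*g : ℕ) : ℤ) = ((r * (r-1) : ℕ) : ℤ) := by exact_mod_cast h2g
    push_cast [Nat.cast_sub (by omega : 1 ≤ r)] at h3
    linear_combination h3
  constructor
  · have hk : ((2*g - 1 : ℕ) : ℤ) - 1 = 2 * (g:ℤ) - 2 := by
      push_cast [Nat.cast_sub (by omega : 1 ≤ 2*g)]
      ring
    rw [← hk]
    exact jump_count r (2*g - 1)
  · obtain ⟨s, rfl⟩ : ∃ s, r = s + 2 := ⟨r - 2, by omega⟩
    have hN : 2 * (g:ℤ) - 2 = ((s:ℤ)+2)^2 - ((s:ℤ)+2) - 2 := by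
      rw [hcast]; push_cast; ring
    rw [hN]
    exact RS_value s
end

section
/- Let C = C(X, D, G) be an algebraic geometric code on a curve X of genus g over F_q, with D = P_1 + ... + P_n a sum of n distinct rational points avoiding supp(G), and let k = dim C. If 2k ≤ n and n > 2g, then l(G - D) = 0 (the code is non-abundant) and 2·deg(G) - n ≤ 2g - 2. -/
/-- for an AG code `C(X,D,G)` with `D` of degree `n` and
dimension `k = l(G) - l(G-D)`, if `2k ≤ n` and `n > 2g`, then the code is
non-abundant (`l(G-D) = 0`) and `2·deg G - n ≤ 2g - 2`. -/
theorem ag_code_nonabundant (X : RRCurve) (G D : X.Div) (n k : ℕ)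
    (hD : X.deg D = n)
    (hk : (k : ℤ) = (X.l G : ℤ) - X.l (G - D))
    (h2k : 2 * k ≤ n) (hn : 2 * (X.g : ℤ) < n) :
    X.l (G - D) = 0 ∧ 2 * X.deg G - n ≤ 2 * (X.g : ℤ) - 2 := by
  have hdegsub : ∀ A B : X.Div, X.deg (A - B) = X.deg A - X.deg B := by
    intro A B
    rw [sub_eq_add_neg, X.deg_add, X.deg_neg]; ring
  have hlge : ∀ A : X.Div, X.deg A + 1 - X.g ≤ (X.l A : ℤ) := by
    intro A
    have h1 := X.riemann_roch A
    have h2 : (0 : ℤ) ≤ X.l (X.K - A) := Int.ofNat_nonneg _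
    omega
  have hm0 : X.l (G - D) = 0 := by
    by_contra hne
    have hm1 : 1 ≤ X.l (G - D) := Nat.one_le_iff_ne_zero.mpr hne
    have hdGD : 0 ≤ X.deg (G - D) := by
      by_contra h
      exact hne (X.l_eq_zero _ (by omega))
    have hdGD' : (n : ℤ) ≤ X.deg G := by
      rw [hdegsub, hD] at hdGD; omega
    have h2 := hlge G
    by_cases hs : X.l (X.K - (G - D)) = 0
    · have h1 := X.riemann_roch (G - D)
      rw [hs, hdegsub, hD] at h1
      omega
    · have hcl := X.clifford (G - D) hm1 (Nat.one_le_iff_ne_zero.mpr hs)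
      rw [hdegsub, hD] at hcl
      omega
  refine ⟨hm0, ?_⟩
  by_cases hs : X.l (X.K - G) = 0
  · have h1 := X.riemann_roch G
    rw [hs] at h1
    omega
  · have hKG : 0 ≤ X.deg (X.K - G) := by
      by_contra h
      exact hs (X.l_eq_zero _ (by omega))
    rw [hdegsub, X.deg_K] at hKG
    omega
end

section
/- Let S = ⟨r, r+1⟩ with r ≥ 2 and genus g = r(r-1)/2, and let ℓ̃(a) = #{s ∈ S : s ≤ a}, ℓ̃(-1)=0. Let N be an integer with -1 ≤ N ≤ 2g-2 and let a = αr + β (0 ≤ β < r) be a gap of S (a ∉ S) with α ≥ 1 and a ≤ N/2. Then ℓ̃(a) + ℓ̃(N-a) ≤ ℓ̃(a-r) + ℓ̃(N-a+r). -/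
lemma mem_sgen_iff {r : ℕ} (hr : 1 ≤ r) {n : ℕ} : n ∈ sgen r ↔ n % r ≤ n / r := by
  have hr0 : 0 < r := hr
  constructor
  · rintro ⟨x, y, rfl⟩
    have h1 : x * r + y * (r + 1) = y % r + r * (x + y + y / r) := by
      have hy : r * (y / r) + y % r = y := Nat.div_add_mod y r
      calc x * r + y * (r + 1) = x * r + y * r + y := by ring
        _ = x * r + y * r + (r * (y / r) + y % r) := by rw [hy]
        _ = y % r + r * (x + y + y / r) := by ring
    have hmod : (x * r + y * (r + 1)) % r = y % r := by
      rw [h1, Nat.add_mul_mod_self_left, Nat.mod_mod_of_dvd _ dvd_rfl]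
    have hdiv : (x * r + y * (r + 1)) / r = x + y + y / r := by
      rw [h1, Nat.add_mul_div_left _ _ hr0, Nat.div_eq_of_lt (Nat.mod_lt y hr0), Nat.zero_add]
    rw [hmod, hdiv]
    exact le_trans (Nat.mod_le y r) (le_trans (Nat.le_add_left y x) (Nat.le_add_right _ _))
  · intro h
    refine ⟨n / r - n % r, n % r, ?_⟩
    have h3 : n % r * r ≤ n / r * r := Nat.mul_le_mul_right _ h
    have h4 : n / r * r - n % r * r + n % r * r = n / r * r := Nat.sub_add_cancel h3
    have hy : n / r * r + n % r = n := Nat.div_add_mod' n r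
    calc n = (n / r * r - n % r * r) + (n % r * r + n % r) := by omega
      _ = (n / r - n % r) * r + n % r * (r + 1) := by rw [Nat.sub_mul]; ring

lemma tlS_lower_finite (r : ℕ) (M : ℤ) : {s : ℕ | s ∈ sgen r ∧ (s : ℤ) ≤ M}.Finite := by
  apply (Set.finite_Iic M.toNat).subset
  intro s hs
  simp only [Set.mem_Iic]
  have := hs.2
  omega

lemma tlS_add (r : ℕ) (m : ℤ) :
    tlS r (m + r) = tlS r m + {s : ℕ | s ∈ sgen r ∧ m < (s : ℤ) ∧ (s : ℤ) ≤ m + r}.ncard := by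
  have hsplit : {s : ℕ | s ∈ sgen r ∧ (s : ℤ) ≤ m + r} =
      {s : ℕ | s ∈ sgen r ∧ (s : ℤ) ≤ m} ∪
        {s : ℕ | s ∈ sgen r ∧ m < (s : ℤ) ∧ (s : ℤ) ≤ m + r} := by
    ext s
    simp only [Set.mem_setOf_eq, Set.mem_union]
    constructor
    · rintro ⟨h1, h2⟩
      by_cases h : (s : ℤ) ≤ m
      · exact Or.inl ⟨h1, h⟩
      · exact Or.inr ⟨h1, by omega, h2⟩
    · rintro (⟨h1, h2⟩ | ⟨h1, h2, h3⟩)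
      · exact ⟨h1, by omega⟩
      · exact ⟨h1, h3⟩
  have hdisj : Disjoint {s : ℕ | s ∈ sgen r ∧ (s : ℤ) ≤ m}
      {s : ℕ | s ∈ sgen r ∧ m < (s : ℤ) ∧ (s : ℤ) ≤ m + r} := by
    rw [Set.disjoint_left]
    rintro s ⟨_, h2⟩ ⟨_, h3, _⟩
    omega
  have hf2 : {s : ℕ | s ∈ sgen r ∧ m < (s : ℤ) ∧ (s : ℤ) ≤ m + r}.Finite := by
    apply (tlS_lower_finite r (m + r)).subset
    rintro s ⟨h1, _, h3⟩
    exact ⟨h1, h3⟩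
  rw [tlS, hsplit, Set.ncard_union_eq hdisj (tlS_lower_finite r m) hf2, tlS]

/-- if `a = αr + β` is a gap of `⟨r, r+1⟩` with `α ≥ 1` and
`a ≤ N/2`, with `-1 ≤ N ≤ 2g-2` and `g = r(r-1)/2`, then
`ℓ̃(a) + ℓ̃(N-a) ≤ ℓ̃(a-r) + ℓ̃(N-a+r)`. -/
theorem tlS_shift_inequality (r g : ℕ) (hr : 2 ≤ r) (hg : g = r * (r - 1) / 2)
    (a : ℕ) (ha : a ∉ sgen r) (hα : r ≤ a)
    (N : ℤ) (hN1 : -1 ≤ N) (hN2 : N ≤ 2 * (g : ℤ) - 2) (haN : 2 * (a : ℤ) ≤ N) :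
    tlS r (a : ℤ) + tlS r (N - a) ≤ tlS r ((a : ℤ) - r) + tlS r (N - a + r) := by
  have hr0 : 0 < r := by omega
  have hr1 : 1 ≤ r := by omega
  have hBr : a % r < r := Nat.mod_lt _ hr0
  have hgap : a / r < a % r := by
    by_contra h
    exact ha ((mem_sgen_iff hr1).2 (le_of_not_gt h))
  obtain ⟨A, hA⟩ : ∃ A, a / r = A + 1 := by
    have : 1 ≤ a / r := (Nat.one_le_div_iff hr0).2 hα
    exact ⟨a / r - 1, by omega⟩
  have hab : r * (A + 1) + a % r = a := by
    have h := Nat.div_add_mod a r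
    rw [hA] at h
    exact h
  have hcnn : (0 : ℤ) ≤ N - a := by
    have : (0 : ℤ) ≤ (a : ℤ) := Int.ofNat_nonneg a
    linarith
  set c := (N - (a : ℤ)).toNat with hc
  have hcz : (c : ℤ) = N - a := Int.toNat_of_nonneg hcnn
  have hca : a ≤ c := by omega
  set γ := (c + r) / r with hγdef
  set δ := (c + r) % r with hδdef
  have hγδ : r * γ + δ = c + r := Nat.div_add_mod _ _
  have hδr : δ < r := Nat.mod_lt _ hr0
  have hγ : A + 2 ≤ γ := by
    by_contra h
    push_neg at h
    have h1 : r * γ ≤ r * (A + 1) := Nat.mul_le_mul_left r (by omega)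
    omega
  have hγβ : δ < a % r → A + 3 ≤ γ := by
    intro hδβ
    by_contra h
    push_neg at h
    have h1 : r * γ ≤ r * (A + 2) := Nat.mul_le_mul_left r (by omega)
    have h2 : r * (A + 2) = r * (A + 1) + r := by ring
    omega
  -- rewrite using tlS_add
  have h1 := tlS_add r ((a : ℤ) - r)
  rw [show (a : ℤ) - r + r = (a : ℤ) by ring] at h1
  have h2 := tlS_add r (N - (a : ℤ))
  rw [h1, h2]
  have key : {s : ℕ | s ∈ sgen r ∧ (a : ℤ) - r < (s : ℤ) ∧ (s : ℤ) ≤ (a : ℤ)}.ncard ≤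
      {s : ℕ | s ∈ sgen r ∧ N - (a : ℤ) < (s : ℤ) ∧ (s : ℤ) ≤ N - (a : ℤ) + r}.ncard := by
    -- the injection map into the right-hand set
    set f : ℕ → ℕ := fun j => if j ≤ δ then r * γ + j else r * (γ - 1) + j with hf
    have himg1 : {s : ℕ | s ∈ sgen r ∧ (a : ℤ) - r < (s : ℤ) ∧ (s : ℤ) ≤ (a : ℤ)} ⊆
        (fun j => r * (A + 1) + j) '' Set.Iic (A + 1) := by
      rintro s ⟨hs, hs1, hs2⟩
      have hs1' : a < s + r := by omega
      have hs2' : s ≤ a := by omega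
      have hms : s % r ≤ s / r := (mem_sgen_iff hr1).1 hs
      have hsd : r * (s / r) + s % r = s := Nat.div_add_mod s r
      have hsr : s % r < r := Nat.mod_lt _ hr0
      have hq : s / r = A + 1 := by
        rcases Nat.lt_trichotomy (s / r) (A + 1) with h | h | h
        · exfalso
          have hm1 : r * (s / r) ≤ r * A := Nat.mul_le_mul_left r (by omega)
          have hm2 : r * (A + 1) = r * A + r := by ring
          omega
        · exact h
        · exfalso
          have hm1 : r * (A + 2) ≤ r * (s / r) := Nat.mul_le_mul_left r (by omega)
          have hm2 : r * (A + 2) = r * (A + 1) + r := by ring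
          omega
      rw [hq] at hsd
      exact ⟨s % r, by simp only [Set.mem_Iic]; omega, hsd⟩
    have himg2 : f '' Set.Iic (A + 1) ⊆
        {s : ℕ | s ∈ sgen r ∧ N - (a : ℤ) < (s : ℤ) ∧ (s : ℤ) ≤ N - (a : ℤ) + r} := by
      rintro _ ⟨j, hj, rfl⟩
      simp only [Set.mem_Iic] at hj
      have hjβ : j < a % r := by omega
      have hjr : j < r := lt_trans hjβ hBr
      by_cases hjδ : j ≤ δ
      · have hfj : f j = r * γ + j := if_pos hjδ
        rw [hfj]
        refine ⟨?_, ?_, ?_⟩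
        · rw [mem_sgen_iff hr1, Nat.mul_add_mod, Nat.mod_eq_of_lt hjr,
            Nat.mul_add_div hr0, Nat.div_eq_of_lt hjr]
          omega
        · have hn : c < r * γ + j := by omega
          rw [← hcz]
          exact_mod_cast hn
        · have hn : r * γ + j ≤ c + r := by omega
          have : ((r * γ + j : ℕ) : ℤ) ≤ ((c + r : ℕ) : ℤ) := by exact_mod_cast hn
          rw [← hcz]
          push_cast at this ⊢
          linarith
      · push_neg at hjδ
        have hγ3 : A + 3 ≤ γ := hγβ (by omega)
        obtain ⟨γ', hγ'⟩ : ∃ γ', γ = γ' + 1 := ⟨γ - 1, by omega⟩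
        have hfj : f j = r * γ' + j := by
          rw [hf]
          simp only [if_neg (not_le.2 hjδ), hγ', Nat.add_sub_cancel]
        rw [hfj]
        have hrγ : r * γ = r * γ' + r := by rw [hγ']; ring
        refine ⟨?_, ?_, ?_⟩
        · rw [mem_sgen_iff hr1, Nat.mul_add_mod, Nat.mod_eq_of_lt hjr,
            Nat.mul_add_div hr0, Nat.div_eq_of_lt hjr]
          omega
        · have hn : c < r * γ' + j := by omega
          rw [← hcz]
          exact_mod_cast hn
        · have hn : r * γ' + j ≤ c + r := by omega
          have : ((r * γ' + j : ℕ) : ℤ) ≤ ((c + r : ℕ) : ℤ) := by exact_mod_cast hn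
          rw [← hcz]
          push_cast at this ⊢
          linarith
    have hinj : Set.InjOn f (Set.Iic (A + 1)) := by
      intro j hj k hk hjk
      simp only [Set.mem_Iic] at hj hk
      have hjr : j < r := by omega
      have hkr : k < r := by omega
      have hmodf : ∀ i, i < r → f i % r = i := by
        intro i hi
        rw [hf]
        by_cases h : i ≤ δ
        · simp only [if_pos h]
          rw [Nat.mul_add_mod, Nat.mod_eq_of_lt hi]
        · simp only [if_neg h]
          rw [Nat.mul_add_mod, Nat.mod_eq_of_lt hi]
      rw [← hmodf j hjr, ← hmodf k hkr, hjk]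
    have hIic : (Set.Iic (A + 1)).ncard = A + 2 := by
      rw [← Finset.coe_Iic, Set.ncard_coe_finset, Nat.card_Iic]
    have hD2fin : {s : ℕ | s ∈ sgen r ∧ N - (a : ℤ) < (s : ℤ) ∧ (s : ℤ) ≤ N - (a : ℤ) + r}.Finite := by
      apply (tlS_lower_finite r (N - (a : ℤ) + r)).subset
      rintro s ⟨hs1, _, hs3⟩
      exact ⟨hs1, hs3⟩
    calc {s : ℕ | s ∈ sgen r ∧ (a : ℤ) - r < (s : ℤ) ∧ (s : ℤ) ≤ (a : ℤ)}.ncard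
        ≤ ((fun j => r * (A + 1) + j) '' Set.Iic (A + 1)).ncard :=
          Set.ncard_le_ncard himg1 ((Set.finite_Iic _).image _)
      _ = (Set.Iic (A + 1)).ncard :=
          Set.ncard_image_of_injective _ (fun x y h => by omega)
      _ = (f '' Set.Iic (A + 1)).ncard := by
          rw [Set.ncard_image_of_injOn hinj]
      _ ≤ _ := Set.ncard_le_ncard himg2 hD2fin
  omega
end
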